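/- Let q ≠ 0 and r be real numbers. For every nonnegative integer n, ∑_{k=0}^n W(n,k) ĉ_k^q(−r) = (−1)^n/(n+1). -/

import Mathlib

/-!
Substituting `x ↦ y / q` in the defining identity of `W` and using `(y|q)_k = q^k (y/q)_k` gives
`∑ₖ W(n,k) (y|q)_k = (y + r)^n`. Integrating this at `y = -x - r` over `[0, 1]` turns the left side
into `∑ₖ W(n,k) ĉ_k^q(-r)` and the right side into `∫₀¹ (-x)^n dx = (-1)^n / (n + 1)`.
-/

/-- The falling factorial `(x)_k = x(x-1)⋯(x-k+1)`. -/
noncomputable def fallFac (x : ℝ) (k : ℕ) : ℝ := ∏ i ∈ Finset.range k, (x - i)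

/-- The generalized falling factorial `(x|q)_k = x(x-q)⋯(x-(k-1)q)`. -/
noncomputable def genFallFac (q x : ℝ) (k : ℕ) : ℝ := ∏ i ∈ Finset.range k, (x - i * q)

/-- The Cauchy polynomials with a `q` parameter of the second kind:
`ĉ_n^q(z) = ∫_0^1 (−x + z | q)_n dx`. -/
noncomputable def cauchySecond (q z : ℝ) (n : ℕ) : ℝ := ∫ x in (0:ℝ)..1, genFallFac q (-x + z) n

lemma genFallFac_eq_pow_mul_fallFac {q : ℝ} (hq : q ≠ 0) (y : ℝ) (k : ℕ) :
    genFallFac q y k = q ^ k * fallFac (y / q) k := by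
  calc genFallFac q y k = ∏ i ∈ Finset.range k, q * (y / q - i) :=
        Finset.prod_congr rfl fun i _ => by field_simp
    _ = q ^ k * fallFac (y / q) k := by
        rw [Finset.prod_mul_distrib, Finset.prod_const, Finset.card_range, fallFac]

lemma continuous_genFallFac (q : ℝ) (k : ℕ) : Continuous fun y => genFallFac q y k :=
  continuous_finsetProd _ fun _ _ => by fun_prop

lemma sum_mul_cauchySecond (q z : ℝ) (s : Finset ℕ) (c : ℕ → ℝ) :
    ∑ k ∈ s, c k * cauchySecond q z k =
      ∫ x in (0:ℝ)..1, ∑ k ∈ s, c k * genFallFac q (-x + z) k := by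
  have hint (k : ℕ) :
      IntervalIntegrable (fun x => c k * genFallFac q (-x + z) k) MeasureTheory.volume 0 1 :=
    (continuous_const.mul ((continuous_genFallFac q k).comp (by fun_prop))).intervalIntegrable _ _
  rw [intervalIntegral.integral_finsetSum fun k _ => hint k]
  simp only [intervalIntegral.integral_const_mul, cauchySecond]

lemma sum_mul_genFallFac_eq_add_pow {q r : ℝ} (hq : q ≠ 0) {n : ℕ} (W : ℕ → ℝ)
    (hW : ∀ x : ℝ, (q * x + r) ^ n = ∑ k ∈ Finset.range (n + 1), q ^ k * W k * fallFac x k)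
    (y : ℝ) : ∑ k ∈ Finset.range (n + 1), W k * genFallFac q y k = (y + r) ^ n := by
  have hy : q * (y / q) + r = y + r := by field_simp
  rw [← hy, hW]
  refine Finset.sum_congr rfl fun k _ => ?_
  rw [genFallFac_eq_pow_mul_fallFac hq]
  ring

theorem whitneySecond_mul_cauchySecond_sum_general (q r : ℝ) (hq : q ≠ 0)
    (W : ℕ → ℕ → ℝ)
    (hW : ∀ n : ℕ, ∀ x : ℝ, (q * x + r) ^ n =
      ∑ k ∈ Finset.range (n + 1), q ^ k * W n k * fallFac x k)
    (n : ℕ) :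
    ∑ k ∈ Finset.range (n + 1), W n k * cauchySecond q (-r) k =
      (-1 : ℝ) ^ n / ((n : ℝ) + 1) := by
  have hpoint (x : ℝ) :
      ∑ k ∈ Finset.range (n + 1), W n k * genFallFac q (-x + -r) k = (-1) ^ n * x ^ n := by
    rw [sum_mul_genFallFac_eq_add_pow hq (W n) (hW n), neg_add_cancel_right, neg_pow]
  rw [sum_mul_cauchySecond, intervalIntegral.integral_congr fun x _ => hpoint x,
    intervalIntegral.integral_const_mul, integral_pow]
  simp [div_eq_mul_inv]

/-- `∑_{k=0}^n W(n,k) ĉ_k^q(−r) = (−1)^n/(n+1)`. -/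
theorem whitneySecond_mul_cauchySecond_sum (q r : ℝ) (hq : q ≠ 0)
    (W : ℕ → ℕ → ℝ)
    (hW0 : ∀ n k, n < k → W n k = 0)
    (hW : ∀ n : ℕ, ∀ x : ℝ, (q * x + r) ^ n =
      ∑ k ∈ Finset.range (n + 1), q ^ k * W n k * fallFac x k)
    (n : ℕ) :
    ∑ k ∈ Finset.range (n + 1), W n k * cauchySecond q (-r) k =
      (-1 : ℝ) ^ n / ((n : ℝ) + 1) :=
  whitneySecond_mul_cauchySecond_sum_general q r hq W hW n
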